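/- For every integer k ≥ 2 and every finite simple graph G with maximum degree at most 2, f_k(G) ≤ k − 1; moreover there exists a graph G with maximum degree 2, namely the disjoint union of k − 1 copies of the star K_{1,2}, with f_k(G) = k − 1. -/
import Mathlib


open Finset

variable {V : Type*}

open scoped Classical in
/-- Degree of `v` in the subgraph of `G` induced on the vertex set `A`
(number of neighbours of `v` inside `A`). -/
noncomputable def degOn (G : SimpleGraph V) (A : Finset V) (v : V) : ℕ :=
  (A.filter fun w => G.Adj v w).card

/-- Maximum degree of the subgraph of `G` induced on `A`. -/
noncomputable def maxDegOn (G : SimpleGraph V) (A : Finset V) : ℕ :=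
  A.sup (degOn G A)

open scoped Classical in
/-- The subgraph of `G` induced on `A` has fewer than `k` vertices or at least `k`
vertices realising its maximum degree. -/
def equates (G : SimpleGraph V) (k : ℕ) (A : Finset V) : Prop :=
  A.card < k ∨ k ≤ (A.filter fun v => degOn G A v = maxDegOn G A).card

open scoped Classical in
/-- `f_k` of the subgraph of `G` induced on `A`: the minimum number of vertices of `A`
whose deletion leaves an induced subgraph with fewer than `k` vertices or with at
least `k` vertices realising its maximum degree. -/
noncomputable def fkOn (G : SimpleGraph V) (k : ℕ) (A : Finset V) : ℕ :=
  sInf {m | ∃ S, S ⊆ A ∧ S.card = m ∧ equates G k (A \ S)}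

/-- `f_k(G)`. -/
noncomputable def fk [Fintype V] (G : SimpleGraph V) (k : ℕ) : ℕ :=
  fkOn G k Finset.univ

/-- `diff` of the subgraph of `G` induced on `A`: the largest degree minus the
second-largest degree (with multiplicity) of this subgraph. -/
noncomputable def diffOn (G : SimpleGraph V) (A : Finset V) : ℕ :=
  maxDegOn G A - ((A.val.map (degOn G A)).erase (maxDegOn G A)).sup

/-- `diff(G) = d₁ - d₂`, the difference between the largest and second-largest
vertex degrees of `G`. -/
noncomputable def diffDeg [Fintype V] (G : SimpleGraph V) : ℕ :=
  diffOn G Finset.univ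

universe u

/-- `m` disjoint copies of the star `K_{1,2}` (the centre of each copy is the vertex
with second coordinate `0`). -/
def starsK12 (m : ℕ) : SimpleGraph (Fin m × Fin 3) :=
  SimpleGraph.fromRel fun x y => x.1 = y.1 ∧ x.2 = 0 ∧ y.2 ≠ 0
open scoped Classical

section Infra
variable {G : SimpleGraph V} {A B C S : Finset V} {u v w x y : V} {k n : ℕ}

lemma degOn_mono (h : B ⊆ A) (v : V) : degOn G B v ≤ degOn G A v := by
  classical
  exact Finset.card_le_card (by
    intro w hw
    simp only [degOn, Finset.mem_filter] at *
    exact ⟨h hw.1, hw.2⟩)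

lemma degOn_le_maxDegOn (h : v ∈ A) : degOn G A v ≤ maxDegOn G A :=
  Finset.le_sup h

lemma maxDegOn_le (h : ∀ v ∈ A, degOn G A v ≤ n) : maxDegOn G A ≤ n :=
  Finset.sup_le h

lemma maxDegOn_mono (h : B ⊆ A) : maxDegOn G B ≤ maxDegOn G A :=
  maxDegOn_le fun v hv => (degOn_mono h v).trans (degOn_le_maxDegOn (h hv))

lemma nbr_iff (h : (A.filter fun w => G.Adj v w) = S) (w : V) :
    (w ∈ A ∧ G.Adj v w) ↔ w ∈ S := by
  rw [← h, Finset.mem_filter]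

lemma degOn_eq_zero (h : ∀ w ∈ A, ¬ G.Adj v w) : degOn G A v = 0 := by
  simp only [degOn, Finset.card_eq_zero, Finset.filter_eq_empty_iff]
  exact h

lemma maxDegOn_eq_zero (h : ∀ v ∈ A, degOn G A v = 0) : maxDegOn G A = 0 :=
  Nat.le_zero.mp (maxDegOn_le (fun v hv => (h v hv).le))

lemma degOn_eq_zero_of_maxDegOn (h : maxDegOn G A = 0) (hv : v ∈ A) : degOn G A v = 0 :=
  Nat.le_zero.mp (h ▸ degOn_le_maxDegOn hv)

lemma equates_of_zero (h : maxDegOn G A = 0) : equates G k A := by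
  rcases lt_or_ge A.card k with h' | h'
  · exact Or.inl h'
  · refine Or.inr ?_
    have : (A.filter fun v => degOn G A v = maxDegOn G A) = A := by
      refine Finset.filter_eq_self.mpr fun v hv => ?_
      rw [h, degOn_eq_zero_of_maxDegOn h hv]
    rw [this]; exact h'

lemma filter_adj_insert_not_adj (h : ¬ G.Adj u v) :
    ((insert v B).filter fun w => G.Adj u w) = B.filter fun w => G.Adj u w := by
  ext w
  simp only [Finset.mem_filter, Finset.mem_insert]
  constructor
  · rintro ⟨rfl | hw, ha⟩
    · exact absurd ha h
    · exact ⟨hw, ha⟩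
  · rintro ⟨hw, ha⟩
    exact ⟨Or.inr hw, ha⟩

lemma filter_adj_insert_adj (h : G.Adj u v) :
    ((insert v B).filter fun w => G.Adj u w) = insert v (B.filter fun w => G.Adj u w) := by
  ext w
  simp only [Finset.mem_filter, Finset.mem_insert]
  constructor
  · rintro ⟨rfl | hw, ha⟩
    · exact Or.inl rfl
    · exact Or.inr ⟨hw, ha⟩
  · rintro (rfl | ⟨hw, ha⟩)
    · exact ⟨Or.inl rfl, h⟩
    · exact ⟨Or.inr hw, ha⟩

lemma degOn_insert_not_adj (h : ¬ G.Adj u v) :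
    degOn G (insert v B) u = degOn G B u := by
  simp only [degOn, filter_adj_insert_not_adj h]

lemma degOn_insert_adj (h : G.Adj u v) (hvB : v ∉ B) :
    degOn G (insert v B) u = degOn G B u + 1 := by
  simp only [degOn, filter_adj_insert_adj h]
  rw [Finset.card_insert_of_notMem (fun hc => hvB (Finset.mem_filter.mp hc).1)]

lemma pair_of_card_two (h : S.card = 2) (hv : v ∈ S) : ∃ y, y ≠ v ∧ S = {v, y} := by
  obtain ⟨a, b, hab, rfl⟩ := Finset.card_eq_two.mp h
  rcases Finset.mem_insert.mp hv with rfl | hv'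
  · exact ⟨b, fun h => hab h.symm, rfl⟩
  · rw [Finset.mem_singleton] at hv'
    subst hv'
    exact ⟨a, hab, Finset.pair_comm a v⟩


/-- Card of the set of degree-1 vertices after inserting an edge `v-x` that is
isolated from `C`. -/
lemma insert2_filter_card (hvx : v ≠ x) (hvC : v ∉ C) (hxC : x ∉ C)
    (hdv : degOn G (insert v (insert x C)) v = 1)
    (hdx : degOn G (insert v (insert x C)) x = 1)
    (hdu : ∀ u ∈ C, degOn G (insert v (insert x C)) u = degOn G C u) :
    ((insert v (insert x C)).filter fun u => degOn G (insert v (insert x C)) u = 1).card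
      = (C.filter fun u => degOn G C u = 1).card + 2 := by
  have hfe : ((insert v (insert x C)).filter fun u => degOn G (insert v (insert x C)) u = 1)
      = insert v (insert x (C.filter fun u => degOn G C u = 1)) := by
    ext u
    simp only [Finset.mem_filter, Finset.mem_insert]
    constructor
    · rintro ⟨rfl | rfl | hu, hd⟩
      · exact Or.inl rfl
      · exact Or.inr (Or.inl rfl)
      · exact Or.inr (Or.inr ⟨hu, (hdu u hu) ▸ hd⟩)
    · rintro (rfl | rfl | ⟨hu, hq⟩)
      · exact ⟨Or.inl rfl, hdv⟩
      · exact ⟨Or.inr (Or.inl rfl), hdx⟩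
      · exact ⟨Or.inr (Or.inr hu), (hdu u hu).trans hq⟩
  rw [hfe, Finset.card_insert_of_notMem, Finset.card_insert_of_notMem]
  · exact fun hc => hxC (Finset.mem_filter.mp hc).1
  · intro hc
    rcases Finset.mem_insert.mp hc with rfl | hc'
    · exact hvx rfl
    · exact hvC (Finset.mem_filter.mp hc').1

/-- Dropping known degree-2 vertices bounds the degree-2 count of a subset. -/
lemma D2_drop (hA : maxDegOn G A ≤ 2) {A' W : Finset V} (hsub : A' ⊆ A)
    (hW : W ⊆ A.filter fun u => degOn G A u = 2)
    (hdisj : ∀ u ∈ W, u ∉ A' ∨ degOn G A' u ≠ 2) :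
    (A'.filter fun u => degOn G A' u = 2).card + W.card
      ≤ (A.filter fun u => degOn G A u = 2).card := by
  have hss : (A'.filter fun u => degOn G A' u = 2)
      ⊆ (A.filter fun u => degOn G A u = 2) \ W := by
    intro u hu
    obtain ⟨huA', hdu⟩ := Finset.mem_filter.mp hu
    have h2 : degOn G A u = 2 := by
      have h1 := degOn_mono (G := G) hsub u
      have h3 := (degOn_le_maxDegOn (hsub huA')).trans hA
      omega
    refine Finset.mem_sdiff.mpr ⟨Finset.mem_filter.mpr ⟨hsub huA', h2⟩, fun hW' => ?_⟩
    rcases hdisj u hW' with h | h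
    · exact h huA'
    · exact h hdu
  have := Finset.card_le_card hss
  rw [Finset.card_sdiff_of_subset hW] at this
  have := Finset.card_le_card hW
  omega

set_option maxHeartbeats 2000000 in
lemma key (G : SimpleGraph V) :
    ∀ (n : ℕ) (A : Finset V), A.card ≤ n → maxDegOn G A ≤ 2 →
    ∃ S₁ S₂ : Finset V, S₁ ⊆ A ∧ S₂ ⊆ A ∧
      maxDegOn G (A \ S₁) = 0 ∧
      maxDegOn G (A \ S₂) ≤ 1 ∧
      S₂.card ≤ (A.filter fun u => degOn G A u = 2).card ∧
      2 * S₁.card ≤ (A.filter fun u => degOn G A u = 2).card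
        + ((A \ S₂).filter fun u => degOn G (A \ S₂) u = 1).card := by
  intro n
  induction n with
  | zero =>
    intro A hcard _
    have hA : A = ∅ := Finset.card_eq_zero.mp (Nat.le_zero.mp hcard)
    subst hA
    refine ⟨∅, ∅, Finset.Subset.refl _, Finset.Subset.refl _, ?_, ?_, ?_, ?_⟩ <;>
      simp [maxDegOn]
  | succ n ih =>
    intro A hcard hmax
    by_cases h0 : ∀ v ∈ A, degOn G A v = 0
    · refine ⟨∅, ∅, Finset.empty_subset _, Finset.empty_subset _, ?_, ?_, ?_, ?_⟩ <;>
        simp only [Finset.sdiff_empty, Finset.card_empty]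
      · exact maxDegOn_eq_zero h0
      · exact (maxDegOn_eq_zero h0).le.trans (by omega)
      · omega
      · omega
    · push_neg at h0
      obtain ⟨v₀, hv₀A, hd₀⟩ := h0
      by_cases h1 : ∃ v ∈ A, degOn G A v = 1
      · obtain ⟨v, hvA, hdv⟩ := h1
        have hN1 : (A.filter fun w => G.Adj v w).card = 1 := hdv
        obtain ⟨x, hNv⟩ := Finset.card_eq_one.mp hN1
        obtain ⟨hxA, hadjvx⟩ := (nbr_iff hNv x).mpr (Finset.mem_singleton_self x)
        have hvnbr : ∀ w ∈ A, G.Adj v w → w = x := fun w hw ha =>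
          Finset.mem_singleton.mp ((nbr_iff hNv w).mp ⟨hw, ha⟩)
        have hvx : v ≠ x := hadjvx.ne
        have hdxpos : 0 < degOn G A x :=
          Finset.card_pos.mpr ⟨v, Finset.mem_filter.mpr ⟨hvA, hadjvx.symm⟩⟩
        have hdxle : degOn G A x ≤ 2 := (degOn_le_maxDegOn hxA).trans hmax
        rcases (by omega : degOn G A x = 1 ∨ degOn G A x = 2) with hdx | hdx
        · -- case 1a : component is a single edge v-x
          have hNx1 : (A.filter fun w => G.Adj x w).card = 1 := hdx
          obtain ⟨x', hNx⟩ := Finset.card_eq_one.mp hNx1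
          have hx'v : v = x' :=
            Finset.mem_singleton.mp ((nbr_iff hNx v).mp ⟨hvA, hadjvx.symm⟩)
          subst hx'v
          have hxnbr : ∀ w ∈ A, G.Adj x w → w = v := fun w hw ha =>
            Finset.mem_singleton.mp ((nbr_iff hNx w).mp ⟨hw, ha⟩)
          set A' := A \ ({v, x} : Finset V) with hA'
          have hvA' : v ∉ A' := by simp [hA']
          have hxA' : x ∉ A' := by simp [hA']
          have hsubA' : A' ⊆ A := Finset.sdiff_subset
          have hcard' : A'.card ≤ n := by
            have hss : A' ⊂ A := Finset.sdiff_ssubset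
              (by rw [Finset.insert_subset_iff, Finset.singleton_subset_iff]; exact ⟨hvA, hxA⟩)
              ⟨v, Finset.mem_insert_self v {x}⟩
            have := Finset.card_lt_card hss
            omega
          obtain ⟨S₁', S₂', hs₁, hs₂, hm0, hm1, hc2, hc1⟩ :=
            ih A' hcard' ((maxDegOn_mono hsubA').trans hmax)
          have hvS₁ : v ∉ S₁' := fun h => hvA' (hs₁ h)
          have hvS₂ : v ∉ S₂' := fun h => hvA' (hs₂ h)
          have hxS₁ : x ∉ S₁' := fun h => hxA' (hs₁ h)
          have hxS₂ : x ∉ S₂' := fun h => hxA' (hs₂ h)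
          set C := A' \ S₂' with hC
          have hCA : C ⊆ A := Finset.sdiff_subset.trans hsubA'
          have hvC : v ∉ C := fun h => hvA' (Finset.sdiff_subset h)
          have hxC : x ∉ C := fun h => hxA' (Finset.sdiff_subset h)
          have hE2 : A \ S₂' = insert v (insert x C) := by
            ext u
            simp only [hC, hA', Finset.mem_sdiff, Finset.mem_insert, Finset.mem_singleton]
            constructor
            · rintro ⟨huA, huS⟩
              by_cases h2 : u = v
              · exact Or.inl h2
              by_cases h3 : u = x
              · exact Or.inr (Or.inl h3)
              · exact Or.inr (Or.inr ⟨⟨huA, by tauto⟩, huS⟩)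
            · rintro (rfl | rfl | ⟨⟨huA, _⟩, huS⟩)
              exacts [⟨hvA, hvS₂⟩, ⟨hxA, hxS₂⟩, ⟨huA, huS⟩]
          have hdegv : degOn G (insert v (insert x C)) v = 1 := by
            have h₀ : degOn G C v = 0 :=
              degOn_eq_zero fun w hw ha => hxC ((hvnbr w (hCA hw) ha) ▸ hw)
            rw [degOn_insert_not_adj (G.irrefl), degOn_insert_adj hadjvx hxC, h₀]
          have hdegx : degOn G (insert v (insert x C)) x = 1 := by
            have h₀ : degOn G C x = 0 :=
              degOn_eq_zero fun w hw ha => hvC ((hxnbr w (hCA hw) ha) ▸ hw)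
            rw [degOn_insert_adj hadjvx.symm
                (fun h => (Finset.mem_insert.mp h).elim hvx hvC),
              degOn_insert_not_adj (G.irrefl), h₀]
          have hdegu : ∀ u ∈ C, degOn G (insert v (insert x C)) u = degOn G C u := by
            intro u huC
            have huA := hCA huC
            have hunx : u ≠ x := fun h => hxC (h ▸ huC)
            have hunv : u ≠ v := fun h => hvC (h ▸ huC)
            rw [degOn_insert_not_adj (fun ha => hunx (hvnbr u huA ha.symm)),
              degOn_insert_not_adj (fun ha => hunv (hxnbr u huA ha.symm))]
          have hmax1' : maxDegOn G (A \ S₂') ≤ 1 := by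
            rw [hE2]
            refine maxDegOn_le fun u hu => ?_
            rcases Finset.mem_insert.mp hu with rfl | hu'
            · exact le_of_eq hdegv
            rcases Finset.mem_insert.mp hu' with rfl | huC
            · exact le_of_eq hdegx
            · rw [hdegu u huC]
              exact (degOn_le_maxDegOn huC).trans hm1
          have hT : ((A \ S₂').filter fun u => degOn G (A \ S₂') u = 1).card
              = (C.filter fun u => degOn G C u = 1).card + 2 := by
            rw [hE2]
            exact insert2_filter_card hvx hvC hxC hdegv hdegx hdegu
          set D := A' \ S₁' with hD
          have hDA : D ⊆ A := Finset.sdiff_subset.trans hsubA'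
          have hvD : v ∉ D := fun h => hvA' (Finset.sdiff_subset h)
          have hxD : x ∉ D := fun h => hxA' (Finset.sdiff_subset h)
          have hE1 : A \ insert x S₁' = insert v D := by
            ext u
            simp only [hD, hA', Finset.mem_sdiff, Finset.mem_insert, Finset.mem_singleton]
            constructor
            · rintro ⟨huA, huS⟩
              by_cases h2 : u = v
              · exact Or.inl h2
              · exact Or.inr ⟨⟨huA, by tauto⟩, by tauto⟩
            · rintro (rfl | ⟨⟨huA, hne⟩, huS⟩)
              · exact ⟨hvA, by tauto⟩
              · exact ⟨huA, by tauto⟩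
          have hmax0' : maxDegOn G (A \ insert x S₁') = 0 := by
            rw [hE1]
            refine maxDegOn_eq_zero fun u hu => ?_
            rcases Finset.mem_insert.mp hu with rfl | huD
            · rw [degOn_insert_not_adj (G.irrefl)]
              exact degOn_eq_zero fun w hw ha => hxD ((hvnbr w (hDA hw) ha) ▸ hw)
            · have hunx : u ≠ x := fun h => hxD (h ▸ huD)
              rw [degOn_insert_not_adj (fun ha => hunx (hvnbr u (hDA huD) ha.symm))]
              exact degOn_eq_zero_of_maxDegOn hm0 huD
          have hdrop := D2_drop (A' := A') (W := ∅) hmax hsubA' (Finset.empty_subset _)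
            (fun u hu => absurd hu (Finset.notMem_empty u))
          rw [Finset.card_empty] at hdrop
          refine ⟨insert x S₁', S₂', Finset.insert_subset hxA (hs₁.trans hsubA'),
            hs₂.trans hsubA', hmax0', hmax1', ?_, ?_⟩
          · omega
          · rw [Finset.card_insert_of_notMem hxS₁, hT]
            omega
        · -- case 1b : x has a second neighbour y
          have hNx2 : (A.filter fun w => G.Adj x w).card = 2 := hdx
          obtain ⟨y, hyv, hNx⟩ := pair_of_card_two hNx2
            (Finset.mem_filter.mpr ⟨hvA, hadjvx.symm⟩)
          obtain ⟨hyA, hadjxy⟩ := (nbr_iff hNx y).mpr (by simp)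
          have hxnbr : ∀ w ∈ A, G.Adj x w → w = v ∨ w = y := fun w hw ha => by
            have h4 := (nbr_iff hNx w).mp ⟨hw, ha⟩
            simpa using h4
          have hxy : x ≠ y := hadjxy.ne
          have hvy : v ≠ y := fun h => hyv h.symm
          set A' := A \ ({v, x, y} : Finset V) with hA'
          have hvA' : v ∉ A' := by simp [hA']
          have hxA' : x ∉ A' := by simp [hA']
          have hyA' : y ∉ A' := by simp [hA']
          have hsubA' : A' ⊆ A := Finset.sdiff_subset
          have hcard' : A'.card ≤ n := by
            have hss : A' ⊂ A := Finset.sdiff_ssubset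
              (by rw [Finset.insert_subset_iff, Finset.insert_subset_iff,
                    Finset.singleton_subset_iff]
                  exact ⟨hvA, hxA, hyA⟩)
              ⟨v, Finset.mem_insert_self _ _⟩
            have := Finset.card_lt_card hss
            omega
          obtain ⟨S₁', S₂', hs₁, hs₂, hm0, hm1, hc2, hc1⟩ :=
            ih A' hcard' ((maxDegOn_mono hsubA').trans hmax)
          have hvS₁ : v ∉ S₁' := fun h => hvA' (hs₁ h)
          have hvS₂ : v ∉ S₂' := fun h => hvA' (hs₂ h)
          have hxS₁ : x ∉ S₁' := fun h => hxA' (hs₁ h)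
          have hxS₂ : x ∉ S₂' := fun h => hxA' (hs₂ h)
          have hyS₁ : y ∉ S₁' := fun h => hyA' (hs₁ h)
          have hyS₂ : y ∉ S₂' := fun h => hyA' (hs₂ h)
          set C := A' \ S₂' with hC
          have hCA : C ⊆ A := Finset.sdiff_subset.trans hsubA'
          have hvC : v ∉ C := fun h => hvA' (Finset.sdiff_subset h)
          have hxC : x ∉ C := fun h => hxA' (Finset.sdiff_subset h)
          have hyC : y ∉ C := fun h => hyA' (Finset.sdiff_subset h)
          have hE2 : A \ insert y S₂' = insert v (insert x C) := by
            ext u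
            simp only [hC, hA', Finset.mem_sdiff, Finset.mem_insert, Finset.mem_singleton]
            constructor
            · rintro ⟨huA, huS⟩
              by_cases h2 : u = v
              · exact Or.inl h2
              by_cases h3 : u = x
              · exact Or.inr (Or.inl h3)
              · exact Or.inr (Or.inr ⟨⟨huA, by tauto⟩, by tauto⟩)
            · rintro (rfl | rfl | ⟨⟨huA, hne⟩, huS⟩)
              · exact ⟨hvA, by tauto⟩
              · exact ⟨hxA, by tauto⟩
              · exact ⟨huA, by tauto⟩
          have hdegv : degOn G (insert v (insert x C)) v = 1 := by
            have h₀ : degOn G C v = 0 :=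
              degOn_eq_zero fun w hw ha => hxC ((hvnbr w (hCA hw) ha) ▸ hw)
            rw [degOn_insert_not_adj (G.irrefl), degOn_insert_adj hadjvx hxC, h₀]
          have hdegx : degOn G (insert v (insert x C)) x = 1 := by
            have h₀ : degOn G C x = 0 := degOn_eq_zero fun w hw ha =>
              ((hxnbr w (hCA hw) ha).elim (fun h => hvC (h ▸ hw)) (fun h => hyC (h ▸ hw)))
            rw [degOn_insert_adj hadjvx.symm
                (fun h => (Finset.mem_insert.mp h).elim hvx hvC),
              degOn_insert_not_adj (G.irrefl), h₀]
          have hdegu : ∀ u ∈ C, degOn G (insert v (insert x C)) u = degOn G C u := by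
            intro u huC
            have huA := hCA huC
            have hunx : u ≠ x := fun h => hxC (h ▸ huC)
            have hunv : u ≠ v := fun h => hvC (h ▸ huC)
            have huny : u ≠ y := fun h => hyC (h ▸ huC)
            rw [degOn_insert_not_adj (fun ha => hunx (hvnbr u huA ha.symm)),
              degOn_insert_not_adj
                (fun ha => ((hxnbr u huA ha.symm).elim hunv huny))]
          have hmax1' : maxDegOn G (A \ insert y S₂') ≤ 1 := by
            rw [hE2]
            refine maxDegOn_le fun u hu => ?_
            rcases Finset.mem_insert.mp hu with rfl | hu'
            · exact le_of_eq hdegv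
            rcases Finset.mem_insert.mp hu' with rfl | huC
            · exact le_of_eq hdegx
            · rw [hdegu u huC]
              exact (degOn_le_maxDegOn huC).trans hm1
          have hT : ((A \ insert y S₂').filter
                fun u => degOn G (A \ insert y S₂') u = 1).card
              = (C.filter fun u => degOn G C u = 1).card + 2 := by
            rw [hE2]
            exact insert2_filter_card hvx hvC hxC hdegv hdegx hdegu
          have hS₂sub : insert y S₂' ⊆ A := Finset.insert_subset hyA (hs₂.trans hsubA')
          have hS₂card : (insert y S₂').card = S₂'.card + 1 :=
            Finset.card_insert_of_notMem hyS₂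
          have hdypos : 0 < degOn G A y :=
            Finset.card_pos.mpr ⟨x, Finset.mem_filter.mpr ⟨hxA, hadjxy.symm⟩⟩
          have hdyle : degOn G A y ≤ 2 := (degOn_le_maxDegOn hyA).trans hmax
          rcases (by omega : degOn G A y = 1 ∨ degOn G A y = 2) with hdy | hdy
          · -- case 1b-i : deg y = 1, component is the path v-x-y
            have hNy1 : (A.filter fun w => G.Adj y w).card = 1 := hdy
            obtain ⟨x', hNy⟩ := Finset.card_eq_one.mp hNy1
            have hx'x : x = x' :=
              Finset.mem_singleton.mp ((nbr_iff hNy x).mp ⟨hxA, hadjxy.symm⟩)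
            subst hx'x
            have hynbr : ∀ w ∈ A, G.Adj y w → w = x := fun w hw ha =>
              Finset.mem_singleton.mp ((nbr_iff hNy w).mp ⟨hw, ha⟩)
            set D := A' \ S₁' with hD
            have hDA : D ⊆ A := Finset.sdiff_subset.trans hsubA'
            have hvD : v ∉ D := fun h => hvA' (Finset.sdiff_subset h)
            have hxD : x ∉ D := fun h => hxA' (Finset.sdiff_subset h)
            have hyD : y ∉ D := fun h => hyA' (Finset.sdiff_subset h)
            have hE1 : A \ insert x S₁' = insert v (insert y D) := by
              ext u
              simp only [hD, hA', Finset.mem_sdiff, Finset.mem_insert, Finset.mem_singleton]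
              constructor
              · rintro ⟨huA, huS⟩
                by_cases h2 : u = v
                · exact Or.inl h2
                by_cases h3 : u = y
                · exact Or.inr (Or.inl h3)
                · exact Or.inr (Or.inr ⟨⟨huA, by tauto⟩, by tauto⟩)
              · rintro (rfl | rfl | ⟨⟨huA, hne⟩, huS⟩)
                · exact ⟨hvA, by tauto⟩
                · exact ⟨hyA, by tauto⟩
                · exact ⟨huA, by tauto⟩
            have hmax0' : maxDegOn G (A \ insert x S₁') = 0 := by
              rw [hE1]
              refine maxDegOn_eq_zero fun u hu => ?_
              rcases Finset.mem_insert.mp hu with rfl | hu'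
              · rw [degOn_insert_not_adj (G.irrefl),
                  degOn_insert_not_adj (fun ha => hxy (hvnbr y hyA ha).symm)]
                exact degOn_eq_zero fun w hw ha => hxD ((hvnbr w (hDA hw) ha) ▸ hw)
              rcases Finset.mem_insert.mp hu' with rfl | huD
              · rw [degOn_insert_not_adj (fun ha => hvx (hynbr v hvA ha)),
                  degOn_insert_not_adj (G.irrefl)]
                exact degOn_eq_zero fun w hw ha => hxD ((hynbr w (hDA hw) ha) ▸ hw)
              · have hunx : u ≠ x := fun h => hxD (h ▸ huD)
                rw [degOn_insert_not_adj (fun ha => hunx (hvnbr u (hDA huD) ha.symm)),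
                  degOn_insert_not_adj (fun ha => hunx (hynbr u (hDA huD) ha.symm))]
                exact degOn_eq_zero_of_maxDegOn hm0 huD
            have hWx : ({x} : Finset V) ⊆ A.filter fun u => degOn G A u = 2 := by
              rw [Finset.singleton_subset_iff]
              exact Finset.mem_filter.mpr ⟨hxA, hdx⟩
            have hdrop := D2_drop hmax hsubA' hWx
              (fun u hu => Or.inl (by rw [Finset.mem_singleton] at hu; subst hu; exact hxA'))
            rw [Finset.card_singleton] at hdrop
            refine ⟨insert x S₁', insert y S₂',
              Finset.insert_subset hxA (hs₁.trans hsubA'), hS₂sub, hmax0', hmax1', ?_, ?_⟩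
            · rw [hS₂card]
              omega
            · rw [Finset.card_insert_of_notMem hxS₁, hT]
              omega
          · -- case 1b-ii : deg y = 2
            set D := A' \ S₁' with hD
            have hDA : D ⊆ A := Finset.sdiff_subset.trans hsubA'
            have hxD : x ∉ D := fun h => hxA' (Finset.sdiff_subset h)
            have hE1 : A \ insert y (insert x S₁') = insert v D := by
              ext u
              simp only [hD, hA', Finset.mem_sdiff, Finset.mem_insert, Finset.mem_singleton]
              constructor
              · rintro ⟨huA, huS⟩
                by_cases h2 : u = v
                · exact Or.inl h2
                · exact Or.inr ⟨⟨huA, by tauto⟩, by tauto⟩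
              · rintro (rfl | ⟨⟨huA, hne⟩, huS⟩)
                · exact ⟨hvA, by tauto⟩
                · exact ⟨huA, by tauto⟩
            have hmax0' : maxDegOn G (A \ insert y (insert x S₁')) = 0 := by
              rw [hE1]
              refine maxDegOn_eq_zero fun u hu => ?_
              rcases Finset.mem_insert.mp hu with rfl | huD
              · rw [degOn_insert_not_adj (G.irrefl)]
                exact degOn_eq_zero fun w hw ha => hxD ((hvnbr w (hDA hw) ha) ▸ hw)
              · have hunx : u ≠ x := fun h => hxD (h ▸ huD)
                rw [degOn_insert_not_adj (fun ha => hunx (hvnbr u (hDA huD) ha.symm))]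
                exact degOn_eq_zero_of_maxDegOn hm0 huD
            have hWxy : ({x, y} : Finset V) ⊆ A.filter fun u => degOn G A u = 2 := by
              intro u hu
              rcases Finset.mem_insert.mp hu with rfl | hu
              · exact Finset.mem_filter.mpr ⟨hxA, hdx⟩
              · rw [Finset.mem_singleton] at hu
                subst hu
                exact Finset.mem_filter.mpr ⟨hyA, hdy⟩
            have hdisj : ∀ u ∈ ({x, y} : Finset V), u ∉ A' ∨ degOn G A' u ≠ 2 := by
              intro u hu
              rcases Finset.mem_insert.mp hu with rfl | hu
              · exact Or.inl hxA'
              · rw [Finset.mem_singleton] at hu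
                subst hu
                exact Or.inl hyA'
            have hdrop := D2_drop hmax hsubA' hWxy hdisj
            rw [Finset.card_insert_of_notMem (by simp [hxy]), Finset.card_singleton]
              at hdrop
            have hS₁c : (insert y (insert x S₁')).card = S₁'.card + 2 := by
              rw [Finset.card_insert_of_notMem
                  (fun h => (Finset.mem_insert.mp h).elim (fun h => hxy h.symm) hyS₁),
                Finset.card_insert_of_notMem hxS₁]
            refine ⟨insert y (insert x S₁'), insert y S₂',
              Finset.insert_subset hyA (Finset.insert_subset hxA (hs₁.trans hsubA')),
              hS₂sub, hmax0', hmax1', ?_, ?_⟩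
            · rw [hS₂card]
              omega
            · rw [hS₁c, hT]
              omega
      · -- case 2 : some vertex of degree 2, no vertex of degree 1
        push_neg at h1
        have hd₀2 : degOn G A v₀ = 2 := by
          have h2 := (degOn_le_maxDegOn hv₀A).trans hmax
          have h3 := h1 v₀ hv₀A
          omega
        have hN2 : (A.filter fun w => G.Adj v₀ w).card = 2 := hd₀2
        obtain ⟨x, y, hxy, hN⟩ := Finset.card_eq_two.mp hN2
        obtain ⟨hxA, hadjvx⟩ := (nbr_iff hN x).mpr (by simp)
        obtain ⟨hyA, hadjvy⟩ := (nbr_iff hN y).mpr (by simp)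
        have hvx : v₀ ≠ x := hadjvx.ne
        have hvy : v₀ ≠ y := hadjvy.ne
        have hdx : degOn G A x = 2 := by
          have h2 := h1 x hxA
          have h3 := (degOn_le_maxDegOn hxA).trans hmax
          have h4 : 0 < degOn G A x :=
            Finset.card_pos.mpr ⟨v₀, Finset.mem_filter.mpr ⟨hv₀A, hadjvx.symm⟩⟩
          omega
        have hdy : degOn G A y = 2 := by
          have h2 := h1 y hyA
          have h3 := (degOn_le_maxDegOn hyA).trans hmax
          have h4 : 0 < degOn G A y :=
            Finset.card_pos.mpr ⟨v₀, Finset.mem_filter.mpr ⟨hv₀A, hadjvy.symm⟩⟩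
          omega
        set A' := A.erase v₀ with hA'
        have hsubA' : A' ⊆ A := Finset.erase_subset _ _
        have hcard' : A'.card ≤ n := by
          have h5 : A'.card = A.card - 1 := Finset.card_erase_of_mem hv₀A
          have h6 : 0 < A.card := Finset.card_pos.mpr ⟨v₀, hv₀A⟩
          omega
        obtain ⟨S₁', S₂', hs₁, hs₂, hm0, hm1, hc2, hc1⟩ :=
          ih A' hcard' ((maxDegOn_mono hsubA').trans hmax)
        have hvS₁ : v₀ ∉ S₁' := fun h => Finset.notMem_erase v₀ A (hs₁ h)
        have hvS₂ : v₀ ∉ S₂' := fun h => Finset.notMem_erase v₀ A (hs₂ h)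
        have hE : ∀ S' : Finset V, S' ⊆ A' → A \ insert v₀ S' = A' \ S' := by
          intro S' _
          ext u
          simp only [Finset.mem_sdiff, Finset.mem_insert, hA', Finset.mem_erase]
          tauto
        have herase : ∀ z, G.Adj v₀ z → degOn G A' z = degOn G A z - 1 := by
          intro z hadj
          have hfe : (A'.filter fun w => G.Adj z w)
              = (A.filter fun w => G.Adj z w).erase v₀ := by
            ext w
            simp only [Finset.mem_filter, hA', Finset.mem_erase]
            tauto
          have h7 : degOn G A' z = ((A.filter fun w => G.Adj z w).erase v₀).card := by
            rw [degOn, hfe]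
          rw [h7, Finset.card_erase_of_mem (Finset.mem_filter.mpr ⟨hv₀A, hadj.symm⟩)]
          rfl
        have hW : ({v₀, x, y} : Finset V) ⊆ A.filter fun u => degOn G A u = 2 := by
          intro u hu
          rcases Finset.mem_insert.mp hu with rfl | hu
          · exact Finset.mem_filter.mpr ⟨hv₀A, hd₀2⟩
          rcases Finset.mem_insert.mp hu with rfl | hu
          · exact Finset.mem_filter.mpr ⟨hxA, hdx⟩
          rw [Finset.mem_singleton] at hu
          subst hu
          exact Finset.mem_filter.mpr ⟨hyA, hdy⟩
        have hWcard : ({v₀, x, y} : Finset V).card = 3 := by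
          rw [Finset.card_insert_of_notMem (by simp [hvx, hvy]),
            Finset.card_insert_of_notMem (by simp [hxy]), Finset.card_singleton]
        have hdisj : ∀ u ∈ ({v₀, x, y} : Finset V), u ∉ A' ∨ degOn G A' u ≠ 2 := by
          intro u hu
          rcases Finset.mem_insert.mp hu with rfl | hu
          · exact Or.inl (Finset.notMem_erase _ _)
          rcases Finset.mem_insert.mp hu with rfl | hu
          · exact Or.inr (by rw [herase u hadjvx, hdx]; omega)
          rw [Finset.mem_singleton] at hu
          subst hu
          exact Or.inr (by rw [herase u hadjvy, hdy]; omega)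
        have hdrop := D2_drop hmax hsubA' hW hdisj
        rw [hWcard] at hdrop
        refine ⟨insert v₀ S₁', insert v₀ S₂',
          Finset.insert_subset hv₀A (hs₁.trans hsubA'),
          Finset.insert_subset hv₀A (hs₂.trans hsubA'), ?_, ?_, ?_, ?_⟩
        · rw [hE S₁' hs₁]; exact hm0
        · rw [hE S₂' hs₂]; exact hm1
        · rw [Finset.card_insert_of_notMem hvS₂]
          omega
        · rw [Finset.card_insert_of_notMem hvS₁, hE S₂' hs₂]
          omega

lemma equates_inst {α : Type*} {i1 i2 : DecidableEq α} {G : SimpleGraph α} {k : ℕ}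
    {s t : Finset α}
    (h : equates G k (@SDiff.sdiff _ (@Finset.instSDiff _ i1) s t)) :
    equates G k (@SDiff.sdiff _ (@Finset.instSDiff _ i2) s t) := by
  cases Subsingleton.elim i1 i2
  exact h

lemma fkOn_le {G : SimpleGraph V} {k : ℕ} {A S : Finset V} (hS : S ⊆ A)
    (he : equates G k (A \ S)) : fkOn G k A ≤ S.card :=
  Nat.sInf_le ⟨S, hS, rfl, he⟩

lemma part1 {W : Type*} [Fintype W] (G : SimpleGraph W) {k : ℕ} (hk : 2 ≤ k)
    (hG : maxDegOn G Finset.univ ≤ 2) : fk G k ≤ k - 1 := by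
  by_cases hd : k ≤ ((Finset.univ : Finset W).filter fun u => degOn G Finset.univ u = 2).card
  · obtain ⟨v, hv⟩ := Finset.card_pos.mp (lt_of_lt_of_le (by omega) hd)
    obtain ⟨hvu, hdv⟩ := Finset.mem_filter.mp hv
    have hmax2 : maxDegOn G (Finset.univ : Finset W) = 2 :=
      le_antisymm hG (hdv ▸ degOn_le_maxDegOn hvu)
    have heq : equates G k ((Finset.univ : Finset W) \ ∅) := by
      rw [Finset.sdiff_empty]
      right
      have h5 : ((Finset.univ : Finset W).filter
            fun v => degOn G Finset.univ v = maxDegOn G Finset.univ)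
          = (Finset.univ : Finset W).filter fun u => degOn G Finset.univ u = 2 := by
        simp only [hmax2]
      rw [h5]
      exact hd
    have h6 := fkOn_le (Finset.empty_subset _) heq
    rw [Finset.card_empty] at h6
    exact h6.trans (by omega)
  · push_neg at hd
    obtain ⟨S₁, S₂, hs₁, hs₂, hm0, hm1, hc2, hc1⟩ :=
      key G (Finset.univ : Finset W).card Finset.univ le_rfl hG
    by_cases hT : k ≤ ((Finset.univ \ S₂).filter
        fun u => degOn G (Finset.univ \ S₂) u = 1).card
    · obtain ⟨v, hv⟩ := Finset.card_pos.mp (lt_of_lt_of_le (by omega) hT)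
      obtain ⟨hvB, hdv⟩ := Finset.mem_filter.mp hv
      have hmax1 : maxDegOn G ((Finset.univ : Finset W) \ S₂) = 1 :=
        le_antisymm hm1 (hdv ▸ degOn_le_maxDegOn hvB)
      have heq : equates G k ((Finset.univ : Finset W) \ S₂) := by
        right
        have h5 : (((Finset.univ : Finset W) \ S₂).filter
              fun v => degOn G (Finset.univ \ S₂) v = maxDegOn G (Finset.univ \ S₂))
            = ((Finset.univ : Finset W) \ S₂).filter
              fun u => degOn G (Finset.univ \ S₂) u = 1 := by
          simp only [hmax1]
        rw [h5]
        exact hT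
      exact (fkOn_le hs₂ heq).trans (by omega)
    · push_neg at hT
      exact (fkOn_le hs₁ (equates_of_zero hm0)).trans (by omega)

section Stars
variable {m : ℕ}

lemma stars_adj {x y : Fin m × Fin 3} :
    (starsK12 m).Adj x y ↔ x.1 = y.1 ∧ ((x.2 = 0 ∧ y.2 ≠ 0) ∨ (y.2 = 0 ∧ x.2 ≠ 0)) := by
  show (SimpleGraph.fromRel _).Adj x y ↔ _
  rw [SimpleGraph.fromRel_adj]
  constructor
  · rintro ⟨hne, ⟨h1, h2, h3⟩ | ⟨h1, h2, h3⟩⟩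
    · exact ⟨h1, Or.inl ⟨h2, h3⟩⟩
    · exact ⟨h1.symm, Or.inr ⟨h2, h3⟩⟩
  · rintro ⟨h1, ⟨h2, h3⟩ | ⟨h2, h3⟩⟩
    · exact ⟨fun he => h3 (by rw [← he]; exact h2), Or.inl ⟨h1, h2, h3⟩⟩
    · exact ⟨fun he => h3 (by rw [he]; exact h2), Or.inr ⟨h1.symm, h2, h3⟩⟩

lemma stars_nbr_center {B : Finset (Fin m × Fin 3)} {j : Fin m} :
    (B.filter fun w => (starsK12 m).Adj (j, 0) w)
      ⊆ {(j, 1), (j, 2)} := by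
  intro w hw
  obtain ⟨hwB, hadj⟩ := Finset.mem_filter.mp hw
  rw [stars_adj] at hadj
  obtain ⟨h1, h2⟩ := hadj
  have hw2 : w.2 ≠ 0 := by
    rcases h2 with ⟨_, h⟩ | ⟨_, h⟩
    · exact h
    · exact absurd rfl h
  have h3 : ∀ i : Fin 3, i ≠ 0 → i = 1 ∨ i = 2 := by decide
  rcases h3 w.2 hw2 with h | h
  · have : w = (j, 1) := by rw [Prod.ext_iff]; exact ⟨h1.symm, h⟩
    simp [this]
  · have : w = (j, 2) := by rw [Prod.ext_iff]; exact ⟨h1.symm, h⟩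
    simp [this]

lemma stars_nbr_leaf {B : Finset (Fin m × Fin 3)} {j : Fin m} {i : Fin 3} (hi : i ≠ 0) :
    (B.filter fun w => (starsK12 m).Adj (j, i) w) ⊆ {(j, 0)} := by
  intro w hw
  obtain ⟨hwB, hadj⟩ := Finset.mem_filter.mp hw
  rw [stars_adj] at hadj
  obtain ⟨h1, h2⟩ := hadj
  have hw2 : w.2 = 0 := by
    rcases h2 with ⟨h, _⟩ | ⟨h, _⟩
    · exact absurd h hi
    · exact h
  have : w = (j, 0) := by rw [Prod.ext_iff]; exact ⟨h1.symm, hw2⟩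
  simp [this]

lemma stars_deg_le (B : Finset (Fin m × Fin 3)) (v : Fin m × Fin 3) :
    degOn (starsK12 m) B v ≤ 2 := by
  obtain ⟨j, i⟩ := v
  by_cases hi : i = 0
  · subst hi
    have := Finset.card_le_card (stars_nbr_center (B := B) (j := j))
    refine le_trans this ?_
    exact (Finset.card_insert_le _ _).trans (by simp)
  · refine le_trans (Finset.card_le_card (stars_nbr_leaf (B := B) (j := j) hi)) ?_
    simp

lemma stars_maxdeg_le (B : Finset (Fin m × Fin 3)) : maxDegOn (starsK12 m) B ≤ 2 :=
  maxDegOn_le fun v _ => stars_deg_le B v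

lemma stars_deg_center {B : Finset (Fin m × Fin 3)} {j : Fin m}
    (h1 : (j, 1) ∈ B) (h2 : (j, 2) ∈ B) : degOn (starsK12 m) B (j, 0) = 2 := by
  have hfe : (B.filter fun w => (starsK12 m).Adj (j, 0) w) = {(j, 1), (j, 2)} := by
    refine subset_antisymm stars_nbr_center ?_
    intro w hw
    rcases Finset.mem_insert.mp hw with rfl | hw
    · exact Finset.mem_filter.mpr ⟨h1, stars_adj.mpr ⟨rfl, Or.inl ⟨rfl, by simp⟩⟩⟩
    · rw [Finset.mem_singleton] at hw
      subst hw
      exact Finset.mem_filter.mpr ⟨h2, stars_adj.mpr ⟨rfl, Or.inl ⟨rfl, by simp⟩⟩⟩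
  rw [degOn, hfe, Finset.card_insert_of_notMem (by simp [Prod.ext_iff]), Finset.card_singleton]

lemma stars_deg_two_center {B : Finset (Fin m × Fin 3)} {v : Fin m × Fin 3}
    (h : degOn (starsK12 m) B v = 2) : v.2 = 0 := by
  by_contra hv
  obtain ⟨j, i⟩ := v
  have hle : degOn (starsK12 m) B (j, i) ≤ 1 := by
    rw [degOn]
    exact (Finset.card_le_card (stars_nbr_leaf (B := B) (j := j) hv)).trans (by simp)
  omega

lemma centers_card_le :
    ((Finset.univ : Finset (Fin m × Fin 3)).filter fun v => v.2 = 0).card ≤ m := by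
  have := Finset.card_le_card_of_injOn (f := Prod.fst)
    (s := (Finset.univ : Finset (Fin m × Fin 3)).filter fun v => v.2 = 0)
    (t := (Finset.univ : Finset (Fin m)))
    (fun _ _ => Finset.mem_univ _)
    (by
      intro a ha b hb hab
      have ha2 := (Finset.mem_filter.mp (Finset.mem_coe.mp ha)).2
      have hb2 := (Finset.mem_filter.mp (Finset.mem_coe.mp hb)).2
      rw [Prod.ext_iff]
      exact ⟨hab, ha2.trans hb2.symm⟩)
  rwa [Finset.card_univ, Fintype.card_fin] at this

end Stars

lemma stars_maxdeg {m : ℕ} (hm : 1 ≤ m) :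
    maxDegOn (starsK12 m) Finset.univ = 2 := by
  refine le_antisymm (stars_maxdeg_le _) ?_
  have h := stars_deg_center (m := m) (j := ⟨0, hm⟩)
    (Finset.mem_univ _) (Finset.mem_univ _)
  exact h ▸ degOn_le_maxDegOn (Finset.mem_univ _)

lemma stars_fk {k : ℕ} (hk : 2 ≤ k) : fk (starsK12 (k - 1)) k = k - 1 := by
  have hm : 1 ≤ k - 1 := by omega
  set m := k - 1 with hmdef
  set Sc := (Finset.univ : Finset (Fin m × Fin 3)).filter (fun v => v.2 = 0) with hSc
  have hScm : Sc.card ≤ m := centers_card_le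
  have hBmem : ∀ v : Fin m × Fin 3, v ∈ Finset.univ \ Sc ↔ v.2 ≠ 0 := by
    intro v
    simp [hSc]
  have hmax0 : maxDegOn (starsK12 m) (Finset.univ \ Sc) = 0 := by
    refine maxDegOn_eq_zero fun v hv => ?_
    have hv2 : v.2 ≠ 0 := (hBmem v).mp hv
    refine degOn_eq_zero fun w hw ha => ?_
    rw [stars_adj] at ha
    have hw2 : w.2 = 0 := by
      rcases ha.2 with ⟨h, _⟩ | ⟨h, _⟩
      · exact absurd h hv2
      · exact h
    exact ((hBmem w).mp hw) hw2
  have hub : fk (starsK12 m) k ≤ Sc.card :=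
    fkOn_le (Finset.filter_subset _ _) (equates_inst (equates_of_zero hmax0))
  have hlb : k - 1 ≤ fk (starsK12 m) k := by
    refine le_csInf ⟨Sc.card, Sc, Finset.filter_subset _ _, rfl,
      equates_inst (equates_of_zero hmax0)⟩ ?_
    rintro b ⟨S, hSu, rfl, heq0⟩
    have heq : equates (starsK12 m) k (Finset.univ \ S) := equates_inst heq0
    by_contra hb
    push_neg at hb
    have himg : (S.image Prod.fst).card < m := lt_of_le_of_lt Finset.card_image_le (by omega)
    have hne : S.image Prod.fst ≠ Finset.univ := by
      intro h
      rw [h, Finset.card_univ, Fintype.card_fin] at himg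
      omega
    obtain ⟨j, -, hj⟩ := Finset.exists_of_ssubset (Finset.ssubset_univ_iff.mpr hne)
    have hcopy : ∀ i : Fin 3, (j, i) ∈ Finset.univ \ S := by
      intro i
      rw [Finset.mem_sdiff]
      exact ⟨Finset.mem_univ _, fun hmem => hj (Finset.mem_image_of_mem Prod.fst hmem)⟩
    have hdc : degOn (starsK12 m) (Finset.univ \ S) (j, 0) = 2 :=
      stars_deg_center (hcopy 1) (hcopy 2)
    have hmax2 : maxDegOn (starsK12 m) (Finset.univ \ S) = 2 :=
      le_antisymm (stars_maxdeg_le _) (hdc ▸ degOn_le_maxDegOn (hcopy 0))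
    have hcardA : (Finset.univ \ S).card = m * 3 - S.card := by
      rw [Finset.card_sdiff_of_subset hSu, Finset.card_univ, Fintype.card_prod,
        Fintype.card_fin, Fintype.card_fin]
    rcases heq with hlt | hge
    · rw [hcardA] at hlt
      omega
    · have hsub2 : ((Finset.univ \ S).filter
            fun v => degOn (starsK12 m) (Finset.univ \ S) v
              = maxDegOn (starsK12 m) (Finset.univ \ S))
          ⊆ (Finset.univ : Finset (Fin m × Fin 3)).filter fun v => v.2 = 0 := by
        intro v hv
        obtain ⟨hv1, hv2⟩ := Finset.mem_filter.mp hv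
        rw [hmax2] at hv2
        exact Finset.mem_filter.mpr ⟨Finset.mem_univ _, stars_deg_two_center hv2⟩
      have h7 := le_trans hge ((Finset.card_le_card hsub2).trans centers_card_le)
      omega
  omega

/-- For every `k ≥ 2` and every finite simple graph `G` with maximum
degree at most `2`, `f_k(G) ≤ k - 1`; moreover the disjoint union of `k - 1` copies of
`K_{1,2}` has maximum degree `2` and `f_k = k - 1`. -/
theorem stmt17 :
    (∀ (k : ℕ), 2 ≤ k → ∀ (V : Type u) [Fintype V] (G : SimpleGraph V),
      maxDegOn G Finset.univ ≤ 2 → fk G k ≤ k - 1) ∧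
    (∀ (k : ℕ), 2 ≤ k →
      maxDegOn (starsK12 (k - 1)) Finset.univ = 2 ∧
      fk (starsK12 (k - 1)) k = k - 1) := by
  constructor
  · intro k hk V _ G hG
    exact part1 G hk hG
  · intro k hk
    exact ⟨stars_maxdeg (by omega), stars_fk hk⟩
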